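/- The function f(s,t) = (s+t)/(tanh(s)+tanh(t)), defined for (s,t) with tanh(s)+tanh(t) ≠ 0 and extended continuously, attains its minimum value 1 at s = t = 0; in particular f(s,t) ≥ 1 for all s,t ∈ ℝ where it is defined. -/
import Mathlib

/-- The extension of `f(s,t) = (s+t)/(tanh s + tanh t)` by continuity: where the
denominator vanishes (i.e. `s = -t`) it equals `cosh s ^ 2`, in particular `1` at `(0,0)`. -/
noncomputable def fExt (s t : ℝ) : ℝ :=
  if Real.tanh s + Real.tanh t ≠ 0 then (s + t) / (Real.tanh s + Real.tanh t)
  else Real.cosh s ^ 2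

lemma tanh_hasDerivAt (x : ℝ) : HasDerivAt Real.tanh (1 / Real.cosh x ^ 2) x := by
  have h : HasDerivAt (fun y => Real.sinh y / Real.cosh y)
      ((Real.cosh x * Real.cosh x - Real.sinh x * Real.sinh x) / Real.cosh x ^ 2) x :=
    (Real.hasDerivAt_sinh x).div (Real.hasDerivAt_cosh x) (ne_of_gt (Real.cosh_pos x))
  have e : (Real.cosh x * Real.cosh x - Real.sinh x * Real.sinh x) = 1 := by
    have := Real.cosh_sq_sub_sinh_sq x
    nlinarith [this]
  rw [e] at h
  convert h using 2 with y
  exact Real.tanh_eq_sinh_div_cosh y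

lemma tanh_strictMono : StrictMono Real.tanh := by
  apply strictMono_of_deriv_pos
  intro x
  rw [(tanh_hasDerivAt x).deriv]
  positivity

lemma g_mono : Monotone (fun x : ℝ => x - Real.tanh x) := by
  apply monotone_of_deriv_nonneg
  · exact fun x => (differentiable_id.sub (fun y => (tanh_hasDerivAt y).differentiableAt)) x
  · intro x
    have h : HasDerivAt (fun x : ℝ => x - Real.tanh x) (1 - 1 / Real.cosh x ^ 2) x :=
      (hasDerivAt_id x).sub (tanh_hasDerivAt x)
    rw [h.deriv]
    have h1 : (1 : ℝ) ≤ Real.cosh x := Real.one_le_cosh x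
    have h2 : (1 : ℝ) ≤ Real.cosh x ^ 2 := by nlinarith
    linarith [div_le_one_of_le₀ h2 (by positivity : (0:ℝ) ≤ Real.cosh x ^ 2)]

lemma key (s t : ℝ) (h : 0 < Real.tanh s + Real.tanh t) :
    Real.tanh s + Real.tanh t ≤ s + t := by
  have hlt : -t < s := by
    have : Real.tanh (-t) < Real.tanh s := by rw [Real.tanh_neg]; linarith
    exact tanh_strictMono.lt_iff_lt.mp this
  have := g_mono hlt.le
  simp only [Real.tanh_neg] at this
  linarith

/-- The function `f(s,t) = (s+t)/(tanh s + tanh t)`, extended continuously, attains its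
minimum value `1` at `s = t = 0`; in particular `f(s,t) ≥ 1` wherever it is defined. -/
theorem stmt_0 :
    (∀ s t : ℝ, 1 ≤ fExt s t) ∧ fExt 0 0 = 1 ∧
    (∀ s t : ℝ, Real.tanh s + Real.tanh t ≠ 0 →
      1 ≤ (s + t) / (Real.tanh s + Real.tanh t)) := by
  have main : ∀ s t : ℝ, Real.tanh s + Real.tanh t ≠ 0 →
      1 ≤ (s + t) / (Real.tanh s + Real.tanh t) := by
    intro s t h
    rcases h.lt_or_gt with hneg | hpos
    · have h' : 0 < Real.tanh (-s) + Real.tanh (-t) := by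
        rw [Real.tanh_neg, Real.tanh_neg]; linarith
      have := key (-s) (-t) h'
      rw [Real.tanh_neg, Real.tanh_neg] at this
      rw [le_div_iff_of_neg hneg]
      linarith
    · rw [le_div_iff₀ hpos]
      linarith [key s t hpos]
  refine ⟨?_, ?_, main⟩
  · intro s t
    unfold fExt
    split_ifs with h
    · exact main s t h
    · have h1 : (1 : ℝ) ≤ Real.cosh s := Real.one_le_cosh s
      nlinarith
  · unfold fExt
    simp [Real.tanh_zero, Real.cosh_zero]
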